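/- arXiv:1312.7333 — 2 statements merged into one kernel-verified Lean document; each statement's English description precedes it below -/
import Mathlib

section
/- Let K be a field of characteristic not 2, and let (A,B) be a pair of symmetric 4×4 matrices over K such that the upper-left 1×3 blocks of both A and B vanish (a₁₁ = a₁₂ = a₁₃ = b₁₁ = b₁₂ = b₁₃ = 0). Then the binary quartic form f(x,y) = 16·det(Ax+By) has discriminant zero. -/
open MvPolynomial

/-- The discriminant of the binary quartic `a x⁴ + b x³y + c x²y² + d xy³ + e y⁴`. -/
def quarticDisc {K : Type*} [CommRing K] (a b c d e : K) : K :=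
  256 * a ^ 3 * e ^ 3 - 192 * a ^ 2 * b * d * e ^ 2 - 128 * a ^ 2 * c ^ 2 * e ^ 2 +
    144 * a ^ 2 * c * d ^ 2 * e - 27 * a ^ 2 * d ^ 4 + 144 * a * b ^ 2 * c * e ^ 2 -
    6 * a * b ^ 2 * d ^ 2 * e - 80 * a * b * c ^ 2 * d * e + 18 * a * b * c * d ^ 3 +
    16 * a * c ^ 4 * e - 4 * a * c ^ 3 * d ^ 2 - 27 * b ^ 4 * e ^ 2 +
    18 * b ^ 3 * c * d * e - 4 * b ^ 3 * d ^ 3 - 4 * b ^ 2 * c ^ 3 * e +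
    b ^ 2 * c ^ 2 * d ^ 2

private lemma coeff_pair_aux {K : Type*} [CommRing K] (c : K) (a b i j : ℕ) :
    coeff (Finsupp.single (0 : Fin 2) i + Finsupp.single (1 : Fin 2) j)
      (C c * (X (0 : Fin 2) ^ a * X 1 ^ b)) = if a = i ∧ b = j then c else 0 := by
  rw [X_pow_eq_monomial, X_pow_eq_monomial, monomial_mul, C_mul_monomial, mul_one, mul_one,
    coeff_monomial]
  congr 1
  simp only [eq_iff_iff]
  constructor
  · intro h
    constructor
    · have h0 := DFunLike.congr_fun h (0 : Fin 2)
      simpa using h0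
    · have h1 := DFunLike.congr_fun h (1 : Fin 2)
      simpa using h1
  · rintro ⟨rfl, rfl⟩; rfl

set_option maxHeartbeats 2000000 in
/-- If `K` has characteristic `≠ 2` and the upper-left `1×3` blocks of the symmetric
matrices `A` and `B` both vanish (`a₁₁ = a₁₂ = a₁₃ = b₁₁ = b₁₂ = b₁₃ = 0`), then the
binary quartic `f(x,y) = 16·det(Ax + By)` has discriminant zero. -/
theorem stmt_7 (K : Type*) [Field K] (hchar : ringChar K ≠ 2)
    (A B : Matrix (Fin 4) (Fin 4) K) (hA : A.IsSymm) (hB : B.IsSymm)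
    (ha1 : A 0 0 = 0) (ha2 : A 0 1 = 0) (ha3 : A 0 2 = 0)
    (hb1 : B 0 0 = 0) (hb2 : B 0 1 = 0) (hb3 : B 0 2 = 0) :
    (let f : MvPolynomial (Fin 2) K :=
      16 * Matrix.det
        ((X 0 : MvPolynomial (Fin 2) K) • A.map C + (X 1 : MvPolynomial (Fin 2) K) • B.map C :
          Matrix (Fin 4) (Fin 4) (MvPolynomial (Fin 2) K));
    quarticDisc
      (f.coeff (Finsupp.single (0 : Fin 2) 4))
      (f.coeff (Finsupp.single (0 : Fin 2) 3 + Finsupp.single (1 : Fin 2) 1))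
      (f.coeff (Finsupp.single (0 : Fin 2) 2 + Finsupp.single (1 : Fin 2) 2))
      (f.coeff (Finsupp.single (0 : Fin 2) 1 + Finsupp.single (1 : Fin 2) 3))
      (f.coeff (Finsupp.single (1 : Fin 2) 4))) = 0 := by
  have hf : (16 * Matrix.det
        ((X 0 : MvPolynomial (Fin 2) K) • A.map C + (X 1 : MvPolynomial (Fin 2) K) • B.map C) :
        MvPolynomial (Fin 2) K) =
      C (-16*(A 0 3*A 0 3*(A 1 1*A 2 2-A 1 2*A 1 2))) * (X 0^4 * X 1^0)
      + C (-16*(A 0 3*A 0 3*(A 1 1*B 2 2+B 1 1*A 2 2-2*A 1 2*B 1 2)+2*A 0 3*B 0 3*(A 1 1*A 2 2-A 1 2*A 1 2))) * (X 0^3 * X 1^1)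
      + C (-16*(A 0 3*A 0 3*(B 1 1*B 2 2-B 1 2*B 1 2)+2*A 0 3*B 0 3*(A 1 1*B 2 2+B 1 1*A 2 2-2*A 1 2*B 1 2)+B 0 3*B 0 3*(A 1 1*A 2 2-A 1 2*A 1 2))) * (X 0^2 * X 1^2)
      + C (-16*(2*A 0 3*B 0 3*(B 1 1*B 2 2-B 1 2*B 1 2)+B 0 3*B 0 3*(A 1 1*B 2 2+B 1 1*A 2 2-2*A 1 2*B 1 2))) * (X 0^1 * X 1^3)
      + C (-16*(B 0 3*B 0 3*(B 1 1*B 2 2-B 1 2*B 1 2))) * (X 0^0 * X 1^4) := by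
    have e10 : A 1 0 = 0 := (hA.apply 0 1).trans ha2
    have e20 : A 2 0 = 0 := (hA.apply 0 2).trans ha3
    have e30 : A 3 0 = A 0 3 := hA.apply 0 3
    have e21 : A 2 1 = A 1 2 := hA.apply 1 2
    have f10 : B 1 0 = 0 := (hB.apply 0 1).trans hb2
    have f20 : B 2 0 = 0 := (hB.apply 0 2).trans hb3
    have f30 : B 3 0 = B 0 3 := hB.apply 0 3
    have f21 : B 2 1 = B 1 2 := hB.apply 1 2
    have g1 : ((2 : Fin 3).succ : Fin 4) = 3 := rfl
    have g2 : ((2 : Fin 3).castSucc : Fin 4) = 2 := rfl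
    have g3 : ((1 : Fin 3).castSucc : Fin 4) = 1 := rfl
    have g4 : ((0 : Fin 3).castSucc : Fin 4) = 0 := rfl
    have g5 : ((3 : Fin 4).succAbove 2) = 2 := rfl
    have g6 : ((3 : Fin 4).succAbove 1) = 1 := rfl
    have g7 : ((3 : Fin 4).succAbove 0) = 0 := rfl
    simp [Matrix.det_succ_row_zero, Fin.sum_univ_succ, Matrix.add_apply, Matrix.smul_apply,
      Matrix.map_apply, smul_eq_mul, ha1, ha2, ha3, hb1, hb2, hb3, e10, e20, e30, e21,
      f10, f20, f30, f21, g1, g2, g3, g4, g5, g6, g7, Matrix.submatrix_apply,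
      Fin.succ_zero_eq_one, Fin.succ_one_eq_two, map_mul, map_add, map_sub, map_neg, map_ofNat]
    ring
  show quarticDisc _ _ _ _ _ = 0
  rw [show (Finsupp.single (0 : Fin 2) 4) =
        Finsupp.single (0 : Fin 2) 4 + Finsupp.single (1 : Fin 2) 0 by simp,
      show (Finsupp.single (1 : Fin 2) 4) =
        Finsupp.single (0 : Fin 2) 0 + Finsupp.single (1 : Fin 2) 4 by simp,
      hf]
  simp only [coeff_add, coeff_pair_aux]
  norm_num [quarticDisc]
  ring
end

section
/- Let Δ(I,J) = (4I³ − J²)/27 and H(I,J) = max{|I|³, J²/4}. Then the number of integer pairs (I,J) with Δ(I,J) > 0 and H(I,J) < X is (8/5)·X^{5/6} + O(X^{1/2}), and the number of integer pairs (I,J) with Δ(I,J) < 0 and H(I,J) < X is (32/5)·X^{5/6} + O(X^{1/2}). -/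
open Finset

-- MVT-type inequality
lemma rpow_diff {a b : ℝ} (hb : 0 ≤ b) (hab : b ≤ a) :
    a ^ ((5:ℝ)/2) - b ^ ((5:ℝ)/2) ≤ 5 * a ^ ((3:ℝ)/2) * (a - b) := by
  have ha : 0 ≤ a := hb.trans hab
  set u := a ^ ((1:ℝ)/2) with hu
  set v := b ^ ((1:ℝ)/2) with hv
  have hu0 : 0 ≤ u := Real.rpow_nonneg ha _
  have hv0 : 0 ≤ v := Real.rpow_nonneg hb _
  have hvu : v ≤ u := Real.rpow_le_rpow hb hab (by norm_num)
  have e1 : a ^ ((5:ℝ)/2) = u ^ (5:ℕ) := by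
    rw [hu, ← Real.rpow_natCast (a ^ ((1:ℝ)/2)) 5, ← Real.rpow_mul ha]; norm_num
  have e2 : b ^ ((5:ℝ)/2) = v ^ (5:ℕ) := by
    rw [hv, ← Real.rpow_natCast (b ^ ((1:ℝ)/2)) 5, ← Real.rpow_mul hb]; norm_num
  have e3 : a ^ ((3:ℝ)/2) = u ^ (3:ℕ) := by
    rw [hu, ← Real.rpow_natCast (a ^ ((1:ℝ)/2)) 3, ← Real.rpow_mul ha]; norm_num
  have e4 : a = u ^ (2:ℕ) := by
    rw [hu, ← Real.rpow_natCast (a ^ ((1:ℝ)/2)) 2, ← Real.rpow_mul ha]; norm_num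
  have e5 : b = v ^ (2:ℕ) := by
    rw [hv, ← Real.rpow_natCast (b ^ ((1:ℝ)/2)) 2, ← Real.rpow_mul hb]; norm_num
  rw [e1, e2, e3, show a - b = u ^ (2:ℕ) - v ^ (2:ℕ) from by rw [← e4, ← e5]]
  have key : 0 ≤ (u - v) * (4*u^4 + 4*u^3*v - u^2*v^2 - u*v^3 - v^4) := by
    have h1 : u^2*v^2 ≤ u^2*u^2 :=
      mul_le_mul_of_nonneg_left (pow_le_pow_left₀ hv0 hvu 2) (by positivity)
    have h2 : u*v^3 ≤ u*u^3 := mul_le_mul_of_nonneg_left (pow_le_pow_left₀ hv0 hvu 3) hu0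
    have h3 : v^4 ≤ u^4 := pow_le_pow_left₀ hv0 hvu 4
    have h4 : 0 ≤ u^3*v := by positivity
    nlinarith [sub_nonneg.2 hvu]
  nlinarith [key]

lemma sqrt_cube (t : ℝ) (ht : 0 ≤ t) : 2 * Real.sqrt (4 * t ^ 3) = 4 * t ^ ((3:ℝ)/2) := by
  rw [Real.sqrt_mul (by norm_num : (0:ℝ) ≤ 4), show (4:ℝ) = 2^2 by norm_num, Real.sqrt_sq (by norm_num : (0:ℝ) ≤ 2),
    Real.sqrt_eq_rpow, ← Real.rpow_natCast t 3, ← Real.rpow_mul ht]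
  norm_num; ring

lemma integral_g {a b : ℝ} (ha : 0 ≤ a) (hab : a ≤ b) :
    ∫ t in a..b, 2 * Real.sqrt (4 * t ^ 3) = 8/5 * (b ^ ((5:ℝ)/2) - a ^ ((5:ℝ)/2)) := by
  rw [intervalIntegral.integral_congr (g := fun t => 4 * t ^ ((3:ℝ)/2))
    (fun t ht => by
      rw [Set.uIcc_of_le hab] at ht
      exact sqrt_cube t (ha.trans ht.1)),
    intervalIntegral.integral_const_mul, integral_rpow (Or.inl (by norm_num))]
  norm_num
  ring

lemma g_mono {s : Set ℝ} (hs : ∀ x ∈ s, 0 ≤ x) :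
    MonotoneOn (fun t => 2 * Real.sqrt (4 * t ^ 3)) s := by
  intro x hx y hy hxy
  have hx0 := hs x hx
  have : x ^ 3 ≤ y ^ 3 := pow_le_pow_left₀ hx0 hxy 3
  have h4 : (4:ℝ) * x ^ 3 ≤ 4 * y ^ 3 := by linarith
  exact mul_le_mul_of_nonneg_left (Real.sqrt_le_sqrt h4) (by norm_num)
open Finset

noncomputable def ccc (i : ℕ) : ℤ := ⌈Real.sqrt (4 * (1 + (i:ℝ)) ^ 3)⌉

noncomputable def nnn (X : ℝ) : ℕ := (⌈X ^ ((1:ℝ)/3)⌉ - 1).toNat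

noncomputable def FF (X : ℝ) : Finset (ℤ × ℤ) :=
  (Finset.range (nnn X)).biUnion fun i =>
    (Finset.Ioo (-(ccc i)) (ccc i)).map ⟨fun J => ((i:ℤ) + 1, J), fun a b h => by simpa using h⟩

noncomputable def MM (X : ℝ) : ℤ := ⌈Real.sqrt (4 * X)⌉

noncomputable def GG (X : ℝ) : Finset (ℤ × ℤ) :=
  Finset.Icc (-((nnn X : ℤ))) (nnn X) ×ˢ Finset.Ioo (-(MM X)) (MM X)

lemma ccc_pos (i : ℕ) : 1 ≤ ccc i :=
  Int.ceil_pos.2 (Real.sqrt_pos.2 (by positivity))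

lemma one_le_y (X : ℝ) (hX : 1 ≤ X) : (1:ℝ) ≤ X ^ ((1:ℝ)/3) :=
  Real.one_le_rpow hX (by norm_num)

lemma nnn_cast (X : ℝ) (hX : 1 ≤ X) : (nnn X : ℤ) = ⌈X ^ ((1:ℝ)/3)⌉ - 1 := by
  have h1 : (1:ℝ) ≤ X ^ ((1:ℝ)/3) := one_le_y X hX
  have h2 : (1:ℤ) ≤ ⌈X ^ ((1:ℝ)/3)⌉ := by
    have := Int.le_ceil (X ^ ((1:ℝ)/3))
    exact_mod_cast (by exact_mod_cast h1.trans this : (1:ℝ) ≤ (⌈X ^ ((1:ℝ)/3)⌉ : ℝ))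
  rw [nnn, Int.toNat_of_nonneg (by omega)]

lemma nnn_lt (X : ℝ) (hX : 1 ≤ X) : (nnn X : ℝ) < X ^ ((1:ℝ)/3) := by
  have h2 : ((nnn X : ℤ) : ℝ) = (⌈X ^ ((1:ℝ)/3)⌉ : ℝ) - 1 := by
    rw [nnn_cast X hX]; push_cast; ring
  have h3 := Int.ceil_lt_add_one (X ^ ((1:ℝ)/3))
  have h4 : ((nnn X : ℤ) : ℝ) = (nnn X : ℝ) := by push_cast; ring
  linarith [h4 ▸ h2]

lemma le_nnn (X : ℝ) (hX : 1 ≤ X) : X ^ ((1:ℝ)/3) ≤ (nnn X : ℝ) + 1 := by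
  have h2 : ((nnn X : ℤ) : ℝ) = (⌈X ^ ((1:ℝ)/3)⌉ : ℝ) - 1 := by
    rw [nnn_cast X hX]; push_cast; ring
  have h3 := Int.le_ceil (X ^ ((1:ℝ)/3))
  have h4 : ((nnn X : ℤ) : ℝ) = (nnn X : ℝ) := by push_cast; ring
  linarith [h4 ▸ h2]

lemma cube_rpow (X : ℝ) (hX : 1 ≤ X) : (X ^ ((1:ℝ)/3)) ^ (3:ℕ) = X := by
  rw [← Real.rpow_natCast (X ^ ((1:ℝ)/3)) 3, ← Real.rpow_mul (by linarith)]
  norm_num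

/-- integer square bound via ceiling of sqrt -/
lemma sq_lt_iff_ceil (c : ℝ) (J : ℤ) :
    (J:ℝ)^2 < c ↔ (-⌈Real.sqrt c⌉ < J ∧ J < ⌈Real.sqrt c⌉) := by
  rcases le_or_gt c 0 with hc | hc
  · constructor
    · intro h; nlinarith [sq_nonneg (J:ℝ)]
    · rintro ⟨h1, h2⟩
      exfalso
      have : Real.sqrt c = 0 := Real.sqrt_eq_zero'.2 hc
      have h0 : ⌈Real.sqrt c⌉ = 0 := by rw [this]; exact Int.ceil_zero
      omega
  · have key : (J:ℝ)^2 < c ↔ |(J:ℝ)| < Real.sqrt c := by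
      rw [← sq_abs]
      exact (Real.lt_sqrt (abs_nonneg _)).symm
    rw [key, ← Int.cast_abs, ← Int.lt_ceil, abs_lt]

lemma abs_cube_lt_iff (X : ℝ) (hX : 1 ≤ X) (I : ℤ) :
    |(I:ℝ)| ^ 3 < X ↔ (-(nnn X : ℤ) ≤ I ∧ I ≤ (nnn X : ℤ)) := by
  have h1 : |(I:ℝ)| ^ 3 < X ↔ |(I:ℝ)| < X ^ ((1:ℝ)/3) := by
    nth_rewrite 1 [← cube_rpow X hX]
    exact pow_lt_pow_iff_left₀ (abs_nonneg _) (by positivity) (by norm_num)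
  rw [h1, ← Int.cast_abs, ← Int.lt_ceil, ← abs_le]
  have := nnn_cast X hX
  omega

lemma sq_div_lt_iff (X : ℝ) (hX : 1 ≤ X) (J : ℤ) :
    (J:ℝ)^2/4 < X ↔ (-(MM X) < J ∧ J < MM X) := by
  have : (J:ℝ)^2/4 < X ↔ (J:ℝ)^2 < 4*X := by constructor <;> intro h <;> linarith
  rw [this, MM, ← sq_lt_iff_ceil]

lemma mem_GG (X : ℝ) (hX : 1 ≤ X) (p : ℤ × ℤ) :
    p ∈ GG X ↔ max (|(p.1 : ℝ)| ^ 3) ((p.2 : ℝ) ^ 2 / 4) < X := by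
  rw [GG, Finset.mem_product, Finset.mem_Icc, Finset.mem_Ioo, max_lt_iff,
    abs_cube_lt_iff X hX, sq_div_lt_iff X hX]

lemma delta_pos_iff (p : ℤ × ℤ) :
    (4 * (p.1 : ℝ) ^ 3 - (p.2 : ℝ) ^ 2) / 27 > 0 ↔ p.2^2 < 4*p.1^3 := by
  have h : (4 * (p.1 : ℝ) ^ 3 - (p.2 : ℝ) ^ 2) / 27 > 0 ↔ ((p.2:ℝ)^2 < 4*(p.1:ℝ)^3) := by
    constructor
    · intro h
      have := (div_pos_iff.1 h).resolve_right (by rintro ⟨_, hh⟩; norm_num at hh)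
      linarith [this.1]
    · intro h; exact div_pos (by linarith) (by norm_num)
  rw [h]; exact_mod_cast Iff.rfl

lemma delta_neg_iff (p : ℤ × ℤ) :
    (4 * (p.1 : ℝ) ^ 3 - (p.2 : ℝ) ^ 2) / 27 < 0 ↔ 4*p.1^3 < p.2^2 := by
  have h : (4 * (p.1 : ℝ) ^ 3 - (p.2 : ℝ) ^ 2) / 27 < 0 ↔ (4*(p.1:ℝ)^3 < (p.2:ℝ)^2) := by
    constructor
    · intro h
      have := (div_neg_iff.1 h).resolve_left (by rintro ⟨_, hh⟩; norm_num at hh)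
      linarith [this.1]
    · intro h; exact div_neg_of_neg_of_pos (by linarith) (by norm_num)
  rw [h]; exact_mod_cast Iff.rfl

lemma mem_FF (X : ℝ) (hX : 1 ≤ X) (p : ℤ × ℤ) :
    p ∈ FF X ↔ (1 ≤ p.1 ∧ p.1 ≤ (nnn X : ℤ) ∧ p.2^2 < 4*p.1^3) := by
  simp only [FF, Finset.mem_biUnion, Finset.mem_range, Finset.mem_map,
    Function.Embedding.coeFn_mk, Finset.mem_Ioo]
  constructor
  · rintro ⟨i, hi, J, ⟨hJ1, hJ2⟩, rfl⟩
    have hcast : (1 + (i:ℝ))^3 = (((i:ℤ)+1 : ℤ) : ℝ)^3 := by push_cast; ring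
    have hsq : (J:ℝ)^2 < 4 * (((i:ℤ)+1 : ℤ) : ℝ)^3 := by
      rw [← hcast]
      exact (sq_lt_iff_ceil _ J).2 ⟨hJ1, hJ2⟩
    refine ⟨by change 1 ≤ (i:ℤ) + 1; omega, by change (i:ℤ) + 1 ≤ (nnn X : ℤ); omega, ?_⟩
    exact_mod_cast hsq
  · rintro ⟨h1, h2, h3⟩
    refine ⟨(p.1 - 1).toNat, by omega, p.2, ?_, ?_⟩
    · have hc : ((( (p.1 - 1).toNat : ℕ) : ℤ)) = p.1 - 1 := Int.toNat_of_nonneg (by omega)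
      have hcast : (1 + (((p.1-1).toNat : ℕ):ℝ))^3 = ((p.1:ℤ) : ℝ)^3 := by
        have : (((p.1-1).toNat : ℕ):ℝ) = ((p.1:ℝ) - 1) := by exact_mod_cast congrArg (Int.cast : ℤ → ℝ) hc
        rw [this]; ring
      have h3' : (p.2:ℝ)^2 < 4*(p.1:ℝ)^3 := by exact_mod_cast h3
      have := (sq_lt_iff_ceil (4 * (1 + (((p.1-1).toNat : ℕ):ℝ))^3) p.2).1 (by rw [hcast]; exact h3')
      exact this
    · have hc : ((( (p.1 - 1).toNat : ℕ) : ℤ)) = p.1 - 1 := Int.toNat_of_nonneg (by omega)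
      simp only [Prod.ext_iff]
      constructor
      · change (((p.1 - 1).toNat : ℕ) : ℤ) + 1 = p.1; omega
      · trivial

lemma FF_eq_filter (X : ℝ) (hX : 1 ≤ X) :
    FF X = (GG X).filter (fun p => p.2^2 < 4*p.1^3) := by
  ext p
  rw [mem_FF X hX, Finset.mem_filter, GG, Finset.mem_product, Finset.mem_Icc, Finset.mem_Ioo]
  constructor
  · rintro ⟨h1, h2, h3⟩
    refine ⟨⟨⟨by omega, h2⟩, ?_⟩, h3⟩
    -- need J bound: J^2 < 4 I^3 ≤ 4 X
    have hIr : (p.1 : ℝ) ≤ (nnn X : ℝ) := by exact_mod_cast h2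
    have hIX : (p.1:ℝ)^3 < X := by
      have h4 : (p.1:ℝ) < X ^ ((1:ℝ)/3) := lt_of_le_of_lt hIr (nnn_lt X hX)
      calc (p.1:ℝ)^3 < (X ^ ((1:ℝ)/3))^(3:ℕ) :=
            pow_lt_pow_left₀ h4 (by exact_mod_cast (by omega : (0:ℤ) ≤ p.1) : (0:ℝ) ≤ (p.1:ℝ)) (by norm_num)
        _ = X := cube_rpow X hX
    have h3' : (p.2:ℝ)^2 < 4*(p.1:ℝ)^3 := by exact_mod_cast h3
    have : (p.2:ℝ)^2/4 < X := by linarith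
    exact (sq_div_lt_iff X hX p.2).1 this
  · rintro ⟨⟨⟨hI1, hI2⟩, hJ⟩, h3⟩
    refine ⟨?_, hI2, h3⟩
    by_contra hc
    push_neg at hc
    have : p.1^3 ≤ 0 := Odd.pow_nonpos (by decide) (by omega)
    nlinarith [sq_nonneg p.2]

lemma card_FF (X : ℝ) : (FF X).card = ∑ i ∈ Finset.range (nnn X), (2 * ccc i - 1).toNat := by
  rw [FF, Finset.card_biUnion]
  · refine Finset.sum_congr rfl fun i _ => ?_
    rw [Finset.card_map, Int.card_Ioo]
    congr 1
    ring
  · intro i _ j _ hij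
    simp only [Finset.disjoint_left, Finset.mem_map, Function.Embedding.coeFn_mk]
    rintro p ⟨J, _, rfl⟩ ⟨J', _, hp⟩
    have h5 : (j:ℤ) + 1 = (i:ℤ) + 1 := congrArg Prod.fst hp
    have h6 : (i:ℤ) = (j:ℤ) := by omega
    exact hij (by exact_mod_cast h6)

lemma card_GG (X : ℝ) :
    (GG X).card = (2*(nnn X:ℤ)+1).toNat * (2*MM X - 1).toNat := by
  rw [GG, Finset.card_product, Int.card_Icc, Int.card_Ioo]
  congr 1 <;> [congr 1; congr 1] <;> ring

lemma two_rpow_32 : (2:ℝ) ^ ((3:ℝ)/2) ≤ 3 := by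
  have h0 : (0:ℝ) ≤ (2:ℝ) ^ ((3:ℝ)/2) := Real.rpow_nonneg (by norm_num) _
  have hsq : ((2:ℝ) ^ ((3:ℝ)/2)) ^ (2:ℕ) = 8 := by
    rw [← Real.rpow_natCast ((2:ℝ) ^ ((3:ℝ)/2)) 2, ← Real.rpow_mul (by norm_num : (0:ℝ) ≤ 2)]
    norm_num
  nlinarith [hsq, h0]

set_option maxHeartbeats 1000000 in
lemma E1 (X : ℝ) (hX : 1 ≤ X) :
    |((FF X).card : ℝ) - 8/5 * X ^ ((5:ℝ)/6)| ≤ 30 * X ^ ((1:ℝ)/2) := by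
  have hX0 : (0:ℝ) ≤ X := by linarith
  set n := nnn X with hn
  set y := X ^ ((1:ℝ)/3) with hy
  have hy1 : (1:ℝ) ≤ y := one_le_y X hX
  have hny : (n:ℝ) < y := nnn_lt X hX
  have hyn : y ≤ (n:ℝ) + 1 := le_nnn X hX
  set g : ℝ → ℝ := fun t => 2 * Real.sqrt (4 * t ^ 3) with hg
  set S := ∑ i ∈ Finset.range n, g (1 + (i:ℝ)) with hS
  -- the cardinality as a real sum
  have hcard : ((FF X).card : ℝ) = ∑ i ∈ Finset.range n, (2*((ccc i : ℤ):ℝ) - 1) := by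
    rw [card_FF, Nat.cast_sum]
    refine Finset.sum_congr rfl fun i _ => ?_
    have h0 : (0:ℤ) ≤ 2 * ccc i - 1 := by have := ccc_pos i; omega
    have h1 : ((2 * ccc i - 1).toNat : ℤ) = 2 * ccc i - 1 := Int.toNat_of_nonneg h0
    exact_mod_cast congrArg (fun z : ℤ => (z:ℝ)) h1
  -- per-term comparison with g
  have hterm : ∀ i : ℕ, g (1 + (i:ℝ)) - 1 ≤ 2*((ccc i : ℤ):ℝ) - 1 ∧
      2*((ccc i : ℤ):ℝ) - 1 ≤ g (1 + (i:ℝ)) + 1 := by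
    intro i
    have h1 : Real.sqrt (4 * (1 + (i:ℝ))^3) ≤ ((ccc i : ℤ):ℝ) := Int.le_ceil _
    have h2 : ((ccc i : ℤ):ℝ) < Real.sqrt (4 * (1 + (i:ℝ))^3) + 1 := Int.ceil_lt_add_one _
    constructor <;> simp only [hg] <;> linarith
  have hsum_ub : ((FF X).card : ℝ) ≤ S + n := by
    rw [hcard]
    calc ∑ i ∈ Finset.range n, (2*((ccc i : ℤ):ℝ) - 1)
        ≤ ∑ i ∈ Finset.range n, (g (1 + (i:ℝ)) + 1) :=
          Finset.sum_le_sum fun i _ => (hterm i).2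
      _ = S + n := by rw [Finset.sum_add_distrib, Finset.sum_const, Finset.card_range]; simp [hS]
  have hsum_lb : S - n ≤ ((FF X).card : ℝ) := by
    rw [hcard]
    have h := Finset.sum_le_sum (f := fun i : ℕ => g (1 + (i:ℝ)) - 1)
      (g := fun i : ℕ => 2*((ccc i : ℤ):ℝ) - 1) (s := Finset.range n)
      (fun i _ => (hterm i).1)
    calc S - n = ∑ i ∈ Finset.range n, (g (1 + (i:ℝ)) - 1) := by
          rw [Finset.sum_sub_distrib, Finset.sum_const, Finset.card_range]; simp [hS]
      _ ≤ _ := h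
  -- integral bounds for S
  have hmono : ∀ x₀ : ℝ, 0 ≤ x₀ → MonotoneOn g (Set.Icc x₀ (x₀ + (n:ℝ))) :=
    fun x₀ hx₀ => g_mono fun x hx => hx₀.trans hx.1
  have hS_ub : S ≤ 8/5 * ((1 + (n:ℝ)) ^ ((5:ℝ)/2) - 1) := by
    have h := MonotoneOn.sum_le_integral (x₀ := 1) (a := n) (f := g) (hmono 1 (by norm_num))
    rw [hg] at h
    rw [integral_g (by norm_num) (by linarith [Nat.cast_nonneg (α := ℝ) n]), Real.one_rpow] at h
    exact h
  have hS_lb : 8/5 * (n:ℝ) ^ ((5:ℝ)/2) ≤ S := by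
    have h := MonotoneOn.integral_le_sum (x₀ := 0) (a := n) (f := g) (hmono 0 le_rfl)
    rw [zero_add, hg] at h
    rw [integral_g le_rfl (Nat.cast_nonneg n), Real.zero_rpow (by norm_num)] at h
    have heq : ∑ i ∈ Finset.range n, g (0 + ((i+1 : ℕ):ℝ)) = S := by
      refine Finset.sum_congr rfl fun i _ => ?_
      simp only [hg]
      congr 2
      push_cast
      ring
    rw [← heq]
    simp only [hg] at h ⊢
    linarith
  -- rpow arithmetic
  have h56 : y ^ ((5:ℝ)/2) = X ^ ((5:ℝ)/6) := by
    rw [hy, ← Real.rpow_mul hX0]; norm_num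
  have h32 : y ^ ((3:ℝ)/2) = X ^ ((1:ℝ)/2) := by
    rw [hy, ← Real.rpow_mul hX0]; norm_num
  have hd1 : X ^ ((5:ℝ)/6) - (n:ℝ) ^ ((5:ℝ)/2) ≤ 5 * X ^ ((1:ℝ)/2) := by
    have h := rpow_diff (Nat.cast_nonneg n) hny.le
    rw [h56, h32] at h
    have h32n : (0:ℝ) ≤ X ^ ((1:ℝ)/2) := Real.rpow_nonneg hX0 _
    nlinarith
  have hd2 : (1 + (n:ℝ)) ^ ((5:ℝ)/2) - X ^ ((5:ℝ)/6) ≤ 15 * X ^ ((1:ℝ)/2) := by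
    have h0 := rpow_diff (by linarith : (0:ℝ) ≤ y) (by linarith : y ≤ 1 + (n:ℝ))
    rw [h56] at h0
    have hpos : (0:ℝ) ≤ (1 + (n:ℝ)) ^ ((3:ℝ)/2) := Real.rpow_nonneg (by positivity) _
    have h6 : (1 + (n:ℝ)) ^ ((3:ℝ)/2) * (1 + (n:ℝ) - y) ≤ (1 + (n:ℝ)) ^ ((3:ℝ)/2) * 1 :=
      mul_le_mul_of_nonneg_left (by linarith) hpos
    have h1n : (1 + (n:ℝ)) ≤ 2 * y := by linarith
    have h2y : (1 + (n:ℝ)) ^ ((3:ℝ)/2) ≤ (2*y) ^ ((3:ℝ)/2) :=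
      Real.rpow_le_rpow (by positivity) h1n (by norm_num)
    have h3y : (2*y) ^ ((3:ℝ)/2) = 2 ^ ((3:ℝ)/2) * y ^ ((3:ℝ)/2) :=
      Real.mul_rpow (by norm_num) (by linarith)
    have h4y : (2*y) ^ ((3:ℝ)/2) ≤ 3 * y ^ ((3:ℝ)/2) := by
      rw [h3y]
      have h32n : (0:ℝ) ≤ y ^ ((3:ℝ)/2) := Real.rpow_nonneg (by linarith) _
      nlinarith [two_rpow_32]
    have h5 : (1 + (n:ℝ)) ^ ((3:ℝ)/2) ≤ 3 * X ^ ((1:ℝ)/2) := by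
      rw [← h32]; linarith
    have h7 : 5 * (1 + (n:ℝ)) ^ ((3:ℝ)/2) * (1 + (n:ℝ) - y)
        = 5 * ((1 + (n:ℝ)) ^ ((3:ℝ)/2) * (1 + (n:ℝ) - y)) := by ring
    rw [h7] at h0
    linarith
  have hyX : y ≤ X ^ ((1:ℝ)/2) := Real.rpow_le_rpow_of_exponent_le hX (by norm_num)
  have hnX : (n:ℝ) ≤ X ^ ((1:ℝ)/2) := hny.le.trans hyX
  have hXu1 : (1:ℝ) ≤ X ^ ((1:ℝ)/2) := Real.one_le_rpow hX (by norm_num)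
  rw [abs_le]
  constructor
  · linarith only [hsum_lb, hS_lb, hd1, hnX, hXu1]
  · linarith only [hsum_ub, hS_ub, hd2, hnX, hXu1]

lemma MM_pos (X : ℝ) (hX : 1 ≤ X) : 1 ≤ MM X :=
  Int.ceil_pos.2 (Real.sqrt_pos.2 (by linarith))

lemma sqrt4X (X : ℝ) (hX : 1 ≤ X) : Real.sqrt (4 * X) = 2 * X ^ ((1:ℝ)/2) := by
  rw [Real.sqrt_mul (by norm_num : (0:ℝ) ≤ 4), show (4:ℝ) = 2^2 by norm_num,
    Real.sqrt_sq (by norm_num : (0:ℝ) ≤ 2), Real.sqrt_eq_rpow]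

lemma E2 (X : ℝ) (hX : 1 ≤ X) :
    |((GG X).card : ℝ) - 8 * X ^ ((5:ℝ)/6)| ≤ 20 * X ^ ((1:ℝ)/2) := by
  have hX0 : (0:ℝ) < X := by linarith
  set y := X ^ ((1:ℝ)/3) with hy
  set u := X ^ ((1:ℝ)/2) with hu
  have hy1 : (1:ℝ) ≤ y := one_le_y X hX
  have hu1 : (1:ℝ) ≤ u := Real.one_le_rpow hX (by norm_num)
  have hyu : y ≤ u := Real.rpow_le_rpow_of_exponent_le hX (by norm_num)
  have hprod : y * u = X ^ ((5:ℝ)/6) := by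
    rw [hy, hu, ← Real.rpow_add hX0]; norm_num
  have hny : ((nnn X : ℕ):ℝ) < y := nnn_lt X hX
  have hyn : y ≤ ((nnn X : ℕ):ℝ) + 1 := le_nnn X hX
  have hMs : Real.sqrt (4*X) ≤ ((MM X : ℤ):ℝ) := Int.le_ceil _
  have hMs2 : ((MM X : ℤ):ℝ) < Real.sqrt (4*X) + 1 := Int.ceil_lt_add_one _
  rw [sqrt4X X hX, ← hu] at hMs hMs2
  have hcast : ((GG X).card : ℝ) = (2*((nnn X : ℕ):ℝ)+1) * (2*((MM X : ℤ):ℝ)-1) := by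
    rw [card_GG, Nat.cast_mul]
    congr 1
    · have h0 : (0:ℤ) ≤ 2*(nnn X:ℤ)+1 := by positivity
      have h1 : ((2*(nnn X:ℤ)+1).toNat : ℤ) = 2*(nnn X:ℤ)+1 := Int.toNat_of_nonneg h0
      exact_mod_cast congrArg (fun z : ℤ => (z:ℝ)) h1
    · have h0 : (0:ℤ) ≤ 2*MM X - 1 := by have := MM_pos X hX; omega
      have h1 : ((2*MM X - 1).toNat : ℤ) = 2*MM X - 1 := Int.toNat_of_nonneg h0
      exact_mod_cast congrArg (fun z : ℤ => (z:ℝ)) h1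
  rw [hcast]
  set a := ((nnn X : ℕ):ℝ)
  set m := ((MM X : ℤ):ℝ)
  have ha0 : 0 ≤ a := Nat.cast_nonneg _
  have hm1 : 2*u ≤ m := hMs
  have hm2 : m < 2*u + 1 := hMs2
  rw [abs_le]
  constructor
  · -- (2a+1)(2m-1) ≥ (2y-1)(4u-1) ≥ 8yu - 2y - 4u + 1
    have key : (2*y-1) * (4*u-1) ≤ (2*a+1)*(2*m-1) := by
      apply mul_le_mul (by linarith) (by linarith) (by linarith) (by linarith)
    nlinarith [key, hprod, hyu, hu1, hy1]
  · have key : (2*a+1)*(2*m-1) ≤ (2*y+1) * (4*u+1) := by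
      apply mul_le_mul (by linarith) (by linarith) (by linarith) (by linarith)
    nlinarith [key, hprod, hyu, hu1, hy1]

lemma Zb (X : ℝ) (hX : 1 ≤ X) :
    (((GG X).filter (fun p => ¬ p.2^2 < 4*p.1^3 ∧ ¬ 4*p.1^3 < p.2^2)).card : ℝ)
      ≤ 6 * X ^ ((1:ℝ)/2) := by
  have hcard : ((GG X).filter (fun p => ¬ p.2^2 < 4*p.1^3 ∧ ¬ 4*p.1^3 < p.2^2)).card
      ≤ (Finset.Icc (-((nnn X : ℤ))) (nnn X) ×ˢ Finset.Icc (0:ℤ) 1).card := by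
    apply Finset.card_le_card_of_injOn (fun p => (p.1, if 0 ≤ p.2 then (0:ℤ) else 1))
    · intro p hp
      rw [Finset.mem_coe, Finset.mem_filter, GG, Finset.mem_product] at hp
      rw [Finset.mem_coe, Finset.mem_product]
      refine ⟨hp.1.1, ?_⟩
      rw [Finset.mem_Icc]
      dsimp only
      split_ifs <;> omega
    · intro p hp q hq heq
      rw [Finset.mem_coe, Finset.mem_filter] at hp hq
      have hp2 : p.2^2 = 4*p.1^3 := le_antisymm (not_lt.1 hp.2.2) (not_lt.1 hp.2.1)
      have hq2 : q.2^2 = 4*q.1^3 := le_antisymm (not_lt.1 hq.2.2) (not_lt.1 hq.2.1)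
      simp only [Prod.mk.injEq] at heq
      obtain ⟨h1, h2⟩ := heq
      have hsq : p.2^2 = q.2^2 := by rw [hp2, hq2, h1]
      have hfac : (p.2 - q.2) * (p.2 + q.2) = 0 := by linear_combination hsq
      have hcase := mul_eq_zero.1 hfac
      have h22 : p.2 = q.2 := by
        rcases hcase with h | h
        · omega
        · by_cases h0p : 0 ≤ p.2 <;> by_cases h0q : 0 ≤ q.2 <;> simp [h0p, h0q] at h2 <;> omega
      exact Prod.ext h1 h22
  have hc2 : ((Finset.Icc (-((nnn X : ℤ))) (nnn X) ×ˢ Finset.Icc (0:ℤ) 1).card : ℝ)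
      ≤ 2 * (2*((nnn X : ℕ):ℝ) + 1) := by
    rw [Finset.card_product, Int.card_Icc, Int.card_Icc]
    have h1 : ((nnn X:ℤ) + 1 - -(nnn X:ℤ)).toNat = 2*(nnn X) + 1 := by omega
    have h2 : ((1:ℤ) + 1 - 0).toNat = 2 := by decide
    rw [h1, h2]
    push_cast
    ring_nf
    linarith
  have hny : ((nnn X : ℕ):ℝ) < X ^ ((1:ℝ)/3) := nnn_lt X hX
  have hyu : X ^ ((1:ℝ)/3) ≤ X ^ ((1:ℝ)/2) := Real.rpow_le_rpow_of_exponent_le hX (by norm_num)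
  have hu1 : (1:ℝ) ≤ X ^ ((1:ℝ)/2) := Real.one_le_rpow hX (by norm_num)
  calc (((GG X).filter _).card : ℝ) ≤ _ := Nat.cast_le.2 hcard
    _ ≤ 2 * (2*((nnn X : ℕ):ℝ) + 1) := hc2
    _ ≤ 6 * X ^ ((1:ℝ)/2) := by linarith

lemma partition (X : ℝ) :
    ((GG X).filter (fun p => p.2^2 < 4*p.1^3)).card
      + (((GG X).filter (fun p => 4*p.1^3 < p.2^2)).card
        + ((GG X).filter (fun p => ¬ p.2^2 < 4*p.1^3 ∧ ¬ 4*p.1^3 < p.2^2)).card)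
      = (GG X).card := by
  have h1 := Finset.card_filter_add_card_filter_not
    (s := GG X) (p := fun p : ℤ × ℤ => p.2^2 < 4*p.1^3)
  have h2 := Finset.card_filter_add_card_filter_not
    (s := (GG X).filter (fun p : ℤ × ℤ => ¬ p.2^2 < 4*p.1^3))
    (p := fun p : ℤ × ℤ => 4*p.1^3 < p.2^2)
  rw [Finset.filter_filter, Finset.filter_filter] at h2
  have e1 : (GG X).filter (fun p : ℤ × ℤ => ¬ p.2^2 < 4*p.1^3 ∧ 4*p.1^3 < p.2^2)
      = (GG X).filter (fun p => 4*p.1^3 < p.2^2) := by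
    apply Finset.filter_congr
    intro p _
    constructor
    · rintro ⟨_, h⟩; exact h
    · intro h; exact ⟨by linarith, h⟩
  rw [e1] at h2
  omega

open Asymptotics Filter

lemma natcard_pos (X : ℝ) (hX : 1 ≤ X) :
    (Nat.card {p : ℤ × ℤ //
        (4 * (p.1 : ℝ) ^ 3 - (p.2 : ℝ) ^ 2) / 27 > 0 ∧
          max (|(p.1 : ℝ)| ^ 3) ((p.2 : ℝ) ^ 2 / 4) < X}) = (FF X).card := by
  have hset : {p : ℤ × ℤ |
      (4 * (p.1 : ℝ) ^ 3 - (p.2 : ℝ) ^ 2) / 27 > 0 ∧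
        max (|(p.1 : ℝ)| ^ 3) ((p.2 : ℝ) ^ 2 / 4) < X} = ↑(FF X) := by
    ext p
    rw [Set.mem_setOf_eq, Finset.mem_coe, FF_eq_filter X hX, Finset.mem_filter,
      mem_GG X hX, delta_pos_iff]
    tauto
  rw [← Set.ncard_coe_finset (FF X), ← hset]
  exact Nat.card_coe_set_eq _

lemma natcard_neg (X : ℝ) (hX : 1 ≤ X) :
    (Nat.card {p : ℤ × ℤ //
        (4 * (p.1 : ℝ) ^ 3 - (p.2 : ℝ) ^ 2) / 27 < 0 ∧
          max (|(p.1 : ℝ)| ^ 3) ((p.2 : ℝ) ^ 2 / 4) < X})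
      = ((GG X).filter (fun p => 4*p.1^3 < p.2^2)).card := by
  have hset : {p : ℤ × ℤ |
      (4 * (p.1 : ℝ) ^ 3 - (p.2 : ℝ) ^ 2) / 27 < 0 ∧
        max (|(p.1 : ℝ)| ^ 3) ((p.2 : ℝ) ^ 2 / 4) < X}
      = ↑((GG X).filter (fun p => 4*p.1^3 < p.2^2)) := by
    ext p
    rw [Set.mem_setOf_eq, Finset.mem_coe, Finset.mem_filter, mem_GG X hX, delta_neg_iff]
    tauto
  rw [← Set.ncard_coe_finset, ← hset]
  exact Nat.card_coe_set_eq _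

/-- With `Δ(I,J) = (4I³ − J²)/27` and `H(I,J) = max{|I|³, J²/4}`, the number of integer
pairs `(I,J)` with `Δ(I,J) > 0` and `H(I,J) < X` is `(8/5)·X^(5/6) + O(X^(1/2))`, and
the number with `Δ(I,J) < 0` and `H(I,J) < X` is `(32/5)·X^(5/6) + O(X^(1/2))`. -/
theorem stmt_16 :
    ((fun X : ℝ =>
        (Nat.card {p : ℤ × ℤ //
            (4 * (p.1 : ℝ) ^ 3 - (p.2 : ℝ) ^ 2) / 27 > 0 ∧
              max (|(p.1 : ℝ)| ^ 3) ((p.2 : ℝ) ^ 2 / 4) < X} : ℝ) -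
          8 / 5 * X ^ ((5 : ℝ) / 6)) =O[atTop] fun X : ℝ => X ^ ((1 : ℝ) / 2)) ∧
    ((fun X : ℝ =>
        (Nat.card {p : ℤ × ℤ //
            (4 * (p.1 : ℝ) ^ 3 - (p.2 : ℝ) ^ 2) / 27 < 0 ∧
              max (|(p.1 : ℝ)| ^ 3) ((p.2 : ℝ) ^ 2 / 4) < X} : ℝ) -
          32 / 5 * X ^ ((5 : ℝ) / 6)) =O[atTop] fun X : ℝ => X ^ ((1 : ℝ) / 2)) := by
  constructor
  · rw [Asymptotics.isBigO_iff]
    refine ⟨30, ?_⟩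
    filter_upwards [eventually_ge_atTop (1:ℝ)] with X hX
    rw [Real.norm_eq_abs, Real.norm_eq_abs, natcard_pos X hX,
      abs_of_nonneg (Real.rpow_nonneg (by linarith) _)]
    exact E1 X hX
  · rw [Asymptotics.isBigO_iff]
    refine ⟨60, ?_⟩
    filter_upwards [eventually_ge_atTop (1:ℝ)] with X hX
    rw [Real.norm_eq_abs, Real.norm_eq_abs, natcard_neg X hX,
      abs_of_nonneg (Real.rpow_nonneg (by linarith) _)]
    have hpart := partition X
    have hFF : FF X = (GG X).filter (fun p => p.2^2 < 4*p.1^3) := FF_eq_filter X hX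
    have hB : (((GG X).filter (fun p => 4*p.1^3 < p.2^2)).card : ℝ)
        = ((GG X).card : ℝ) - ((FF X).card : ℝ)
          - (((GG X).filter (fun p => ¬ p.2^2 < 4*p.1^3 ∧ ¬ 4*p.1^3 < p.2^2)).card : ℝ) := by
      rw [hFF]
      have := hpart
      push_cast [← this]
      ring
    rw [hB]
    have h1 := E1 X hX
    have h2 := E2 X hX
    have h3 := Zb X hX
    have h4 : (0:ℝ) ≤ (((GG X).filter
        (fun p => ¬ p.2^2 < 4*p.1^3 ∧ ¬ 4*p.1^3 < p.2^2)).card : ℝ) := Nat.cast_nonneg _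
    rw [abs_le] at h1 h2 ⊢
    constructor <;> linarith
end
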